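/- arXiv:2604.10336 — 2 statements merged into one kernel-verified Lean document; each statement's English description precedes it below -/
import Mathlib

section
/- The double cosets S_α\S_n/S_β of two Young subgroups in S_n are in bijection with the set of matrices with nonnegative integer entries whose i-th row sums to α_i and whose j-th column sums to β_j, via the map sending S_α τ S_β to the matrix (z_{ij}) with z_{ij} = |A_i ∩ τ(B_j)|, where A_i and B_j are the blocks of the canonical set partitions of shapes α and β. -/
/-- The subgroup of permutations of `Fin n` preserving a block function `b`. -/
def youngSubgroup {n : ℕ} {β : Type*} (b : Fin n → β) : Subgroup (Equiv.Perm (Fin n)) where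
  carrier := {σ | ∀ i, b (σ i) = b i}
  one_mem' := fun _ => rfl
  mul_mem' := by
    intro σ τ hσ hτ i
    simpa [Equiv.Perm.mul_apply] using (hσ (τ i)).trans (hτ i)
  inv_mem' := by
    intro σ hσ i
    simpa using (hσ (σ⁻¹ i)).symm

/-- The index of the block containing `x` in the canonical set partition of `{0,…,n-1}`
into consecutive intervals of sizes `l₀, l₁, …`. -/
def blk (l : List ℕ) (x : ℕ) : ℕ :=
  (List.range l.length).countP (fun j => (l.take (j + 1)).sum ≤ x)

/-- The Young subgroup of `S_n` associated to a list of block sizes `l`. -/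
def youngOfList (n : ℕ) (l : List ℕ) : Subgroup (Equiv.Perm (Fin n)) :=
  youngSubgroup (fun i => blk l i.1)


lemma sum_take_le (l : List ℕ) (i : ℕ) : (l.take i).sum ≤ l.sum := by
  conv_rhs => rw [← List.take_append_drop i l]
  rw [List.sum_append]; omega

lemma sum_take_mono (l : List ℕ) {i j : ℕ} (h : i ≤ j) :
    (l.take i).sum ≤ (l.take j).sum := by
  have := sum_take_le (l.take j) i
  rwa [List.take_take, min_eq_left h] at this

lemma countP_range_lt (i m : ℕ) :
    (List.range m).countP (fun j => decide (j < i)) = min i m := by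
  induction m with
  | zero => simp
  | succ m ih =>
    rw [List.range_succ, List.countP_append, ih]
    by_cases h : m < i <;> simp [List.countP_cons, h] <;> omega

lemma blk_eq_of {l : List ℕ} {x i : ℕ} (hi : i < l.length)
    (h1 : (l.take i).sum ≤ x) (h2 : x < (l.take (i + 1)).sum) : blk l x = i := by
  unfold blk
  rw [List.countP_congr (q := fun j => decide (j < i)) ?_, countP_range_lt,
    min_eq_left hi.le]
  have key1 : ∀ j, j < i → (l.take (j + 1)).sum ≤ x := fun j hj =>
    le_trans (sum_take_mono l hj) h1
  have key2 : ∀ j, i ≤ j → x < (l.take (j + 1)).sum := fun j hj =>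
    lt_of_lt_of_le h2 (sum_take_mono l (by omega))
  intro j hj
  simp only [decide_eq_true_eq]
  rcases Nat.lt_or_ge j i with hc | hc
  · simp [key1 j hc, hc]
  · have hf1 : ¬(l.take (j + 1)).sum ≤ x := not_le.mpr (key2 j hc)
    have hf2 : ¬j < i := by omega
    simp [hf1, hf2]

lemma exists_blk (l : List ℕ) {x : ℕ} (hx : x < l.sum) :
    ∃ i, i < l.length ∧ (l.take i).sum ≤ x ∧ x < (l.take (i + 1)).sum := by
  induction l generalizing x with
  | nil => simp at hx
  | cons c l ih =>
    by_cases h : x < c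
    · exact ⟨0, by simp, by simp, by simpa using h⟩
    · push_neg at h
      have hx' : x - c < l.sum := by simp only [List.sum_cons] at hx; omega
      obtain ⟨i, hi, h1, h2⟩ := ih hx'
      refine ⟨i + 1, by simpa using hi, ?_, ?_⟩
      · simpa [List.sum_cons] using by omega
      · simp only [List.take_succ_cons, List.sum_cons]; omega

lemma blk_spec (l : List ℕ) {x : ℕ} (hx : x < l.sum) :
    blk l x < l.length ∧ (l.take (blk l x)).sum ≤ x ∧ x < (l.take (blk l x + 1)).sum := by
  obtain ⟨i, hi, h1, h2⟩ := exists_blk l hx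
  rw [blk_eq_of hi h1 h2]; exact ⟨hi, h1, h2⟩

open Finset in
lemma card_Ico_fin {n u v : ℕ} (hv : v ≤ n) :
    (Finset.univ.filter (fun x : Fin n => u ≤ x.1 ∧ x.1 < v)).card = v - u := by
  rw [← Nat.card_Ico u v]
  apply Finset.card_bij (fun (x : Fin n) _ => x.1)
  · intro x hx; simp only [mem_filter] at hx; exact Finset.mem_Ico.mpr ⟨hx.2.1, hx.2.2⟩
  · intro x hx y hy h; exact Fin.ext h
  · intro m hm
    obtain ⟨h1, h2⟩ := Finset.mem_Ico.mp hm
    exact ⟨⟨m, lt_of_lt_of_le h2 hv⟩, by simp [h1, h2], rfl⟩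

open Finset in
lemma card_blk_filter (l : List ℕ) {n : ℕ} (hl : l.sum = n) {i : ℕ} (hi : i < l.length) :
    (Finset.univ.filter (fun x : Fin n => blk l x.1 = i)).card = l.get ⟨i, hi⟩ := by
  have hcong : Finset.univ.filter (fun x : Fin n => blk l x.1 = i)
      = Finset.univ.filter (fun x : Fin n => (l.take i).sum ≤ x.1 ∧ x.1 < (l.take (i + 1)).sum) := by
    apply Finset.filter_congr
    intro x _
    have hx : (x : ℕ) < l.sum := hl ▸ x.2
    constructor
    · intro hb
      obtain ⟨_, h1, h2⟩ := blk_spec l hx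
      rw [hb] at h1 h2; exact ⟨h1, h2⟩
    · intro ⟨h1, h2⟩; exact blk_eq_of hi h1 h2
  rw [hcong, card_Ico_fin (hl ▸ sum_take_le l (i + 1)),
    List.sum_take_succ l i hi]
  simp

lemma exists_perm_of_card_fiber_eq {α γ : Type*} [Fintype α] [DecidableEq γ]
    [DecidableEq α] (f g : α → γ)
    (h : ∀ c, (Finset.univ.filter (fun x => f x = c)).card
        = (Finset.univ.filter (fun x => g x = c)).card) :
    ∃ σ : Equiv.Perm α, ∀ x, f (σ x) = g x := by
  have e : ∀ c : γ, {x // g x = c} ≃ {x // f x = c} := fun c =>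
    Fintype.equivOfCardEq (by
      rw [Fintype.card_subtype, Fintype.card_subtype]
      exact (h c).symm)
  refine ⟨(Equiv.sigmaFiberEquiv g).symm.trans
    ((Equiv.sigmaCongrRight e).trans (Equiv.sigmaFiberEquiv f)), fun x => ?_⟩
  exact (e (g x) ⟨x, rfl⟩).2

lemma card_filter_perm {n : ℕ} (τ : Equiv.Perm (Fin n)) (p : Fin n → Prop) [DecidablePred p] :
    (Finset.univ.filter (fun x => p (τ x))).card = (Finset.univ.filter p).card := by
  apply Finset.card_bij (fun x _ => τ x)
  · intro x hx; simp only [Finset.mem_filter] at hx ⊢; exact ⟨Finset.mem_univ _, hx.2⟩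
  · intro x _ y _ h; exact τ.injective h
  · intro y hy
    refine ⟨τ⁻¹ y, ?_, by simp⟩
    simp only [Finset.mem_filter] at hy ⊢
    simpa using hy.2


lemma mem_young_iff {n : ℕ} {l : List ℕ} {σ : Equiv.Perm (Fin n)} :
    σ ∈ youngOfList n l ↔ ∀ i : Fin n, blk l (σ i).1 = blk l i.1 := Iff.rfl

def FmDef (n : ℕ) (a b : List ℕ) (τ : Equiv.Perm (Fin n)) :
    Fin a.length → Fin b.length → ℕ := fun i j =>
  (Finset.univ.filter
    (fun x : Fin n => blk a x.1 = i.1 ∧ blk b (τ⁻¹ x).1 = j.1)).card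

section Main

variable {n : ℕ} {a b : List ℕ}

lemma hax (has : a.sum = n) : ∀ x : Fin n, (x : ℕ) < a.sum := fun x => has.symm ▸ x.2

lemma rowSumFm (has : a.sum = n) (hbs : b.sum = n)
    (τ : Equiv.Perm (Fin n)) (i : Fin a.length) :
    ∑ j, FmDef n a b τ i j = a.get i := by
  classical
  have hmaps : ∀ x ∈ Finset.univ.filter (fun x : Fin n => blk a x.1 = i.1),
      (⟨blk b (τ⁻¹ x).1, (blk_spec b (hax hbs (τ⁻¹ x))).1⟩ : Fin b.length)
        ∈ (Finset.univ : Finset (Fin b.length)) := fun _ _ => Finset.mem_univ _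
  have hfib := Finset.card_eq_sum_card_fiberwise hmaps
  rw [card_blk_filter a has i.2] at hfib
  rw [show (⟨i.1, i.2⟩ : Fin a.length) = i from rfl] at hfib
  rw [hfib]
  apply Finset.sum_congr rfl
  intro j _
  rw [Finset.filter_filter]
  simp only [FmDef]
  congr 1
  apply Finset.filter_congr
  intro x _
  simp [Fin.ext_iff]

lemma colSumFm (has : a.sum = n) (hbs : b.sum = n)
    (τ : Equiv.Perm (Fin n)) (j : Fin b.length) :
    ∑ i, FmDef n a b τ i j = b.get j := by
  classical
  have key2 : (Finset.univ.filter (fun x : Fin n => blk b (τ⁻¹ x).1 = j.1)).card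
      = b.get j := by
    rw [card_filter_perm τ⁻¹ (fun y : Fin n => blk b y.1 = j.1),
      card_blk_filter b hbs j.2]
  have hmaps : ∀ x ∈ Finset.univ.filter (fun x : Fin n => blk b (τ⁻¹ x).1 = j.1),
      (⟨blk a x.1, (blk_spec a (hax has x)).1⟩ : Fin a.length)
        ∈ (Finset.univ : Finset (Fin a.length)) := fun _ _ => Finset.mem_univ _
  have hfib := Finset.card_eq_sum_card_fiberwise hmaps
  rw [key2] at hfib
  rw [hfib]
  apply Finset.sum_congr rfl
  intro i _
  rw [Finset.filter_filter]
  simp only [FmDef]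
  congr 1
  apply Finset.filter_congr
  intro x _
  simp [Fin.ext_iff]
  tauto

lemma FmInv (τ σ π : Equiv.Perm (Fin n)) (hσ : σ ∈ youngOfList n a)
    (hπ : π ∈ youngOfList n b) : FmDef n a b (σ * τ * π) = FmDef n a b τ := by
  classical
  have hσ' : ∀ x : Fin n, blk a (σ⁻¹ x).1 = blk a x.1 :=
    mem_young_iff.mp ((youngOfList n a).inv_mem hσ)
  have hπ' : ∀ x : Fin n, blk b (π⁻¹ x).1 = blk b x.1 :=
    mem_young_iff.mp ((youngOfList n b).inv_mem hπ)
  funext i j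
  simp only [FmDef]
  have step1 : Finset.univ.filter
        (fun x : Fin n => blk a x.1 = i.1 ∧ blk b (((σ * τ * π)⁻¹) x).1 = j.1)
      = Finset.univ.filter
        (fun x : Fin n => blk a (σ⁻¹ x).1 = i.1 ∧ blk b (τ⁻¹ (σ⁻¹ x)).1 = j.1) := by
    apply Finset.filter_congr
    intro x _
    have hx : ((σ * τ * π)⁻¹) x = π⁻¹ (τ⁻¹ (σ⁻¹ x)) := by
      simp [mul_inv_rev, Equiv.Perm.mul_apply]
    rw [hx, hπ', hσ']
  rw [step1]
  exact card_filter_perm σ⁻¹ (fun y : Fin n => blk a y.1 = i.1 ∧ blk b (τ⁻¹ y).1 = j.1)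

/-- The matrix with its row/column sum certificates. -/
def Fsub (has : a.sum = n) (hbs : b.sum = n) (τ : Equiv.Perm (Fin n)) :
    {M : Fin a.length → Fin b.length → ℕ //
      (∀ i, ∑ j, M i j = a.get i) ∧ (∀ j, ∑ i, M i j = b.get j)} :=
  ⟨FmDef n a b τ, fun i => rowSumFm has hbs τ i, fun j => colSumFm has hbs τ j⟩

/-- The map on double cosets. -/
def qDef (has : a.sum = n) (hbs : b.sum = n) :
    DoubleCoset.Quotient (youngOfList n a : Set (Equiv.Perm (Fin n))) (youngOfList n b) →
    {M : Fin a.length → Fin b.length → ℕ //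
      (∀ i, ∑ j, M i j = a.get i) ∧ (∀ j, ∑ i, M i j = b.get j)} :=
  Quotient.lift (Fsub has hbs) (by
    intro τ τ' hrel
    obtain ⟨σ, hσ, π, hπ, rfl⟩ := DoubleCoset.rel_iff.mp hrel
    exact Subtype.ext (FmInv τ σ π hσ hπ).symm)

lemma qInj (has : a.sum = n) (hbs : b.sum = n) :
    Function.Injective (qDef (a := a) (b := b) has hbs) := by
  classical
  intro u v
  refine Quotient.inductionOn₂' u v ?_
  intro τ τ' h
  have hM : FmDef n a b τ = FmDef n a b τ' := congrArg Subtype.val h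
  have hfib : ∀ c : ℕ × ℕ,
      (Finset.univ.filter (fun x : Fin n => (blk a x.1, blk b (τ⁻¹ x).1) = c)).card
      = (Finset.univ.filter (fun x : Fin n => (blk a x.1, blk b (τ'⁻¹ x).1) = c)).card := by
    rintro ⟨i, j⟩
    by_cases hij : i < a.length ∧ j < b.length
    · have e1 : ∀ ρ : Equiv.Perm (Fin n),
          Finset.univ.filter (fun x : Fin n => (blk a x.1, blk b (ρ⁻¹ x).1) = (i, j))
          = Finset.univ.filter (fun x : Fin n => blk a x.1 = i ∧ blk b (ρ⁻¹ x).1 = j) := by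
        intro ρ; apply Finset.filter_congr; intro x _; simp [Prod.ext_iff]
      rw [e1 τ, e1 τ']
      exact congrFun (congrFun hM ⟨i, hij.1⟩) ⟨j, hij.2⟩
    · have hemp : ∀ ρ : Equiv.Perm (Fin n),
          Finset.univ.filter (fun x : Fin n => (blk a x.1, blk b (ρ⁻¹ x).1) = (i, j)) = ∅ := by
        intro ρ
        rw [Finset.filter_eq_empty_iff]
        intro x _ hx
        rw [Prod.mk.injEq] at hx
        exact hij ⟨hx.1 ▸ (blk_spec a (hax has x)).1, hx.2 ▸ (blk_spec b (hax hbs (ρ⁻¹ x))).1⟩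
      rw [hemp τ, hemp τ']
  obtain ⟨σ, hσ⟩ := exists_perm_of_card_fiber_eq
    (f := fun x : Fin n => (blk a x.1, blk b (τ⁻¹ x).1))
    (g := fun x : Fin n => (blk a x.1, blk b (τ'⁻¹ x).1)) hfib
  have h1 : ∀ x : Fin n, blk a (σ x).1 = blk a x.1 := fun x =>
    congrArg Prod.fst (hσ x)
  have h2 : ∀ x : Fin n, blk b (τ⁻¹ (σ x)).1 = blk b (τ'⁻¹ x).1 := fun x =>
    congrArg Prod.snd (hσ x)
  refine (DoubleCoset.eq _ _ _ _).mpr ⟨σ⁻¹,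
    (youngOfList n a).inv_mem (mem_young_iff.mpr h1), τ⁻¹ * σ * τ', ?_, by group⟩
  refine mem_young_iff.mpr fun y => ?_
  have hy : (τ⁻¹ * σ * τ') y = τ⁻¹ (σ (τ' y)) := rfl
  rw [hy, h2 (τ' y)]
  simp

lemma qSurj (has : a.sum = n) (hbs : b.sum = n) :
    Function.Surjective (qDef (a := a) (b := b) has hbs) := by
  classical
  rintro ⟨M, hrow, hcol⟩
  have pf : ∀ x : Fin n, blk a x.1 < a.length := fun x => (blk_spec a (hax has x)).1
  let hfun : Fin n → ℕ := fun x =>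
    blk (List.ofFn (M ⟨blk a x.1, pf x⟩)) (x.1 - (a.take (blk a x.1)).sum)
  have key : ∀ (i : Fin a.length) (j : Fin b.length),
      (Finset.univ.filter (fun x : Fin n => blk a x.1 = i.1 ∧ hfun x = j.1)).card = M i j := by
    intro i j
    set row := List.ofFn (M i) with hrowdef
    have hrowlen : row.length = b.length := List.length_ofFn
    have hrowsum : row.sum = a.get i := by rw [hrowdef, List.sum_ofFn]; exact hrow i
    have hSasucc : (a.take (i.1 + 1)).sum = (a.take i.1).sum + a.get i := by
      rw [List.sum_take_succ a i.1 i.2]; simp [List.get_eq_getElem]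
    have hTsucc : (row.take (j.1 + 1)).sum = (row.take j.1).sum + M i j := by
      rw [List.sum_take_succ row j.1 (by rw [hrowlen]; exact j.2)]
      congr 1
      simp [hrowdef]
    have hfx : ∀ x : Fin n, blk a x.1 = i.1 →
        hfun x = blk row (x.1 - (a.take i.1).sum) := by
      intro x hxi
      show blk (List.ofFn (M ⟨blk a x.1, pf x⟩)) (x.1 - (a.take (blk a x.1)).sum) = _
      have hfin : (⟨blk a x.1, pf x⟩ : Fin a.length) = i := Fin.ext hxi
      rw [hfin, hxi, hrowdef]
    have hiff : ∀ x : Fin n, (blk a x.1 = i.1 ∧ hfun x = j.1) ↔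
        ((a.take i.1).sum + (row.take j.1).sum ≤ x.1 ∧
         x.1 < (a.take i.1).sum + (row.take (j.1 + 1)).sum) := by
      intro x
      constructor
      · rintro ⟨hxi, hxj⟩
        obtain ⟨_, hb1, hb2⟩ := blk_spec a (hax has x)
        rw [hxi] at hb1 hb2
        rw [hfx x hxi] at hxj
        have hylt : x.1 - (a.take i.1).sum < row.sum := by rw [hrowsum]; omega
        obtain ⟨_, hc1, hc2⟩ := blk_spec row hylt
        rw [hxj] at hc1 hc2
        omega
      · rintro ⟨hu, hv⟩
        have hT1 : (row.take (j.1 + 1)).sum ≤ row.sum := sum_take_le _ _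
        have hx1 : (a.take i.1).sum ≤ x.1 := le_trans (Nat.le_add_right _ _) hu
        have hxi : blk a x.1 = i.1 := by
          apply blk_eq_of i.2 hx1
          rw [hSasucc]; omega
        refine ⟨hxi, ?_⟩
        rw [hfx x hxi]
        exact blk_eq_of (by rw [hrowlen]; exact j.2) (by omega) (by omega)
    have hvn : (a.take i.1).sum + (row.take (j.1 + 1)).sum ≤ n := by
      have h1 : (row.take (j.1 + 1)).sum ≤ row.sum := sum_take_le _ _
      have h2 := sum_take_le a (i.1 + 1)
      omega
    have hcong := Finset.filter_congr (s := (Finset.univ : Finset (Fin n)))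
      (fun x _ => hiff x)
    rw [hcong, card_Ico_fin hvn]
    omega
  have hfibers : ∀ c : ℕ, (Finset.univ.filter (fun y : Fin n => blk b y.1 = c)).card
      = (Finset.univ.filter (fun x : Fin n => hfun x = c)).card := by
    intro c
    by_cases hc : c < b.length
    · rw [card_blk_filter b hbs hc]
      have hmaps : ∀ x ∈ Finset.univ.filter (fun x : Fin n => hfun x = c),
          (⟨blk a x.1, pf x⟩ : Fin a.length) ∈ (Finset.univ : Finset (Fin a.length)) :=
        fun _ _ => Finset.mem_univ _
      rw [Finset.card_eq_sum_card_fiberwise hmaps]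
      have hterm : ∀ i : Fin a.length,
          ((Finset.univ.filter (fun x : Fin n => hfun x = c)).filter
            (fun x => (⟨blk a x.1, pf x⟩ : Fin a.length) = i)).card = M i ⟨c, hc⟩ := by
        intro i
        rw [Finset.filter_filter]
        have hcong : Finset.univ.filter
              (fun x : Fin n => hfun x = c ∧ (⟨blk a x.1, pf x⟩ : Fin a.length) = i)
            = Finset.univ.filter (fun x : Fin n => blk a x.1 = i.1 ∧ hfun x = c) := by
          apply Finset.filter_congr
          intro x _
          simp only [Fin.ext_iff]
          tauto
        rw [hcong]
        exact key i ⟨c, hc⟩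
      rw [Finset.sum_congr rfl (fun i _ => hterm i)]
      exact (hcol ⟨c, hc⟩).symm
    · have e1 : Finset.univ.filter (fun y : Fin n => blk b y.1 = c) = ∅ := by
        rw [Finset.filter_eq_empty_iff]
        intro x _ h
        exact hc (h ▸ (blk_spec b (hax hbs x)).1)
      have e2 : Finset.univ.filter (fun x : Fin n => hfun x = c) = ∅ := by
        rw [Finset.filter_eq_empty_iff]
        intro x _ h
        apply hc
        have hblt := pf x
        have harg : x.1 - (a.take (blk a x.1)).sum < (List.ofFn (M ⟨blk a x.1, pf x⟩)).sum := by
          rw [List.sum_ofFn]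
          have hr := hrow ⟨blk a x.1, pf x⟩
          obtain ⟨_, hb1, hb2⟩ := blk_spec a (hax has x)
          have hS := List.sum_take_succ a (blk a x.1) hblt
          rw [hr]
          simp only [List.get_eq_getElem] at *
          omega
        have hlt := (blk_spec _ harg).1
        rw [List.length_ofFn] at hlt
        rw [← h]
        exact hlt
      rw [e1, e2]
  obtain ⟨σ, hσ⟩ := exists_perm_of_card_fiber_eq
    (f := fun y : Fin n => blk b y.1) (g := hfun) hfibers
  refine ⟨Quotient.mk'' σ⁻¹, ?_⟩
  apply Subtype.ext
  show FmDef n a b σ⁻¹ = M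
  funext i j
  simp only [FmDef]
  have hcong : Finset.univ.filter
        (fun x : Fin n => blk a x.1 = i.1 ∧ blk b ((σ⁻¹)⁻¹ x).1 = j.1)
      = Finset.univ.filter (fun x : Fin n => blk a x.1 = i.1 ∧ hfun x = j.1) := by
    apply Finset.filter_congr
    intro x _
    rw [inv_inv, hσ x]
  rw [hcong]
  exact key i j

end Main

/-- The double cosets `S_α\S_n/S_β` of two Young subgroups are in bijection with the
matrices of nonnegative integers with row sums `α` and column sums `β`, the double coset
of `τ` being sent to the matrix `z_{ij} = |A_i ∩ τ(B_j)|` where `A_i`, `B_j` are the blocks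
of the canonical set partitions of shapes `α` and `β`. -/
theorem stmt10 (n : ℕ) (a b : List ℕ)
    (hap : ∀ x ∈ a, 0 < x) (hbp : ∀ x ∈ b, 0 < x)
    (has : a.sum = n) (hbs : b.sum = n) :
    ∃ e : DoubleCoset.Quotient (youngOfList n a : Set (Equiv.Perm (Fin n))) (youngOfList n b) ≃
        {M : Fin a.length → Fin b.length → ℕ //
          (∀ i, ∑ j, M i j = a.get i) ∧ (∀ j, ∑ i, M i j = b.get j)},
      ∀ τ : Equiv.Perm (Fin n),
        (e (DoubleCoset.mk (youngOfList n a) (youngOfList n b) τ)).1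
          = fun i j => (Finset.univ.filter
              (fun x : Fin n => blk a x.1 = i.1 ∧ blk b (τ⁻¹ x).1 = j.1)).card := by
  exact ⟨Equiv.ofBijective (qDef has hbs) ⟨qInj has hbs, qSurj has hbs⟩,
    fun τ => rfl⟩
end

section
/- Consider the action of ℤ_n × ℤ_n on the symmetric group S_n where (r, k) acts on a permutation P (viewed as a sequence (P₁,…,P_n) of values) by cyclically shifting indices by r and translating values by k modulo n. The stabilizer of any permutation under this action is a cyclic group whose order divides n. -/
/-!
The translation `k` of a stabilizing pair `(r, k)` is forced by the shift: evaluating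
`P (i + r) + k = P i` at `i = 0` gives `k = P 0 - P r`. Hence the first projection embeds the
stabilizer into the cyclic group `ℤ/n`, and subgroups of cyclic groups are cyclic of order
dividing the order of the group.
-/

/-- The stabilizer of a permutation `P` of `ℤ/n` under the action of `ℤ/n × ℤ/n` by cyclic
shift of indices and translation of values: `{(r,k) : ∀ i, P(i+r) + k = P(i)}`. -/
def patternStab (n : ℕ) (P : Equiv.Perm (ZMod n)) : AddSubgroup (ZMod n × ZMod n) where
  carrier := {rk | ∀ i, P (i + rk.1) + rk.2 = P i}
  zero_mem' := by intro i; simp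
  add_mem' := by
    intro x y hx hy i
    have h1 := hx i
    have h2 := hy (i + x.1)
    calc P (i + (x + y).1) + (x + y).2
        = (P (i + x.1 + y.1) + y.2) + x.2 := by
          simp only [Prod.fst_add, Prod.snd_add]; ring_nf
      _ = P (i + x.1) + x.2 := by rw [h2]
      _ = P i := h1
  neg_mem' := by
    intro x hx i
    have h := hx (i - x.1)
    have : P i = P (i - x.1) - x.2 := by
      rw [← h]; simp [sub_add_cancel]
    rw [this]
    simp [Prod.fst_neg, Prod.snd_neg, sub_eq_add_neg]

theorem snd_eq_of_mem_patternStab {n : ℕ} {P : Equiv.Perm (ZMod n)} {rk : ZMod n × ZMod n}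
    (h : rk ∈ patternStab n P) : rk.2 = P 0 - P rk.1 := by
  rw [eq_sub_iff_add_eq', ← h 0, zero_add]

theorem patternStab_fst_injective (n : ℕ) (P : Equiv.Perm (ZMod n)) :
    Function.Injective ((AddMonoidHom.fst _ _).comp (patternStab n P).subtype) := by
  rintro ⟨a, ha⟩ ⟨b, hb⟩ (hab : a.1 = b.1)
  have hsnd : a.2 = b.2 := by
    rw [snd_eq_of_mem_patternStab ha, snd_eq_of_mem_patternStab hb, hab]
  exact Subtype.ext (Prod.ext hab hsnd)

theorem stmt14_general (n : ℕ) (P : Equiv.Perm (ZMod n)) :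
    IsAddCyclic ↥(patternStab n P) ∧ Nat.card ↥(patternStab n P) ∣ n := by
  have hinj := patternStab_fst_injective n P
  exact ⟨isAddCyclic_of_injective _ hinj,
    (AddSubgroup.card_dvd_of_injective _ hinj).trans (Nat.card_zmod n).dvd⟩

/-- Under the action of `ℤ/n × ℤ/n` on permutations of `ℤ/n` by cyclic index shift and value
translation, the stabilizer of any permutation is a cyclic group whose order divides `n`. -/
theorem stmt14 (n : ℕ) [NeZero n] (P : Equiv.Perm (ZMod n)) :
    IsAddCyclic ↥(patternStab n P) ∧ Nat.card ↥(patternStab n P) ∣ n :=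
  stmt14_general n P
end
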